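/- arXiv:1611.01077 — 6 statements merged into one kernel-verified Lean document; each statement's English description precedes it below -/
import Mathlib

section
/- In F_p, the sum Σ_{r=1}^{p-1} (p+t-1)! / (r+t+1)! · (r+1)! equals 0, where t is the integer representing the inverse of 3 mod p (t = (2p+1)/3 if p ≡ 1 mod 3, t = (p+1)/3 if p ≡ 2 mod 3), and the summand is interpreted as (r+1)! times the falling-factorial quotient (p+t-1)!/(r+t+1)! (which is an integer since r+t+1 ≤ p+t-1 for the relevant range, and is taken to be (p+t-1)·(p+t-2)···(r+t+2)). -/
/-!
Only the summands with `p - t - 1 ≤ r ≤ p - 2` survive: for smaller `r` the product runs over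
the multiple `p` of `p`, and for `r = p - 1` the factor `(r + 1)! = p!` vanishes. Writing
`r = p - 2 - m` with `m < t`, the product reduces mod `p` to `(t - m) ⋯ (t - 1) = m! · C(t - 1, m)`,
and Wilson's theorem in the form `m! · (p - 1 - m)! = (-1)^(m + 1)` turns the summand into
`-(-1)^m · C(t - 1, m)`. The alternating sum of a row of binomial coefficients vanishes as soon
as `t ≥ 2`.
-/

open Finset Nat

namespace ZMod

theorem factorial_mul_factorial_sub_one_sub {p : ℕ} [Fact p.Prime] {m : ℕ} (hm : m < p) :
    (m ! : ZMod p) * ((p - 1 - m)! : ZMod p) = (-1) ^ (m + 1) := by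
  have h := congrArg (Nat.cast : ℕ → ZMod p)
    (factorial_mul_descFactorial (n := p - 1) (k := m) (by omega))
  push_cast at h
  rw [wilsons_lemma, cast_descFactorial hm.le] at h
  have hsq : ((-1 : ZMod p) ^ m) ^ 2 = 1 := by
    rw [← pow_mul, mul_comm, pow_mul, neg_one_sq, one_pow]
  linear_combination (-1) ^ m * h - (m ! : ZMod p) * ((p - 1 - m)! : ZMod p) * hsq

theorem prod_Ico_add_self_natCast (n a k : ℕ) :
    ∏ i ∈ Ico (n + a) (n + a + k), (i : ZMod n) = (a.ascFactorial k : ZMod n) := by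
  rw [prod_Ico_eq_prod_range, add_tsub_cancel_left, ascFactorial_eq_prod_range]
  simp

end ZMod

/-- The summand `(p + t - 1)! / (r + t + 1)! · (r + 1)!` in `𝔽_p`. -/
def quotientTerm (p t r : ℕ) : ZMod p :=
  (∏ i ∈ Icc (r + t + 2) (p + t - 1), (i : ZMod p)) * ((r + 1)! : ZMod p)

theorem quotientTerm_eq_zero_of_add_le {p t r : ℕ} (ht : 1 ≤ t) (h : r + t + 2 ≤ p) :
    quotientTerm p t r = 0 := by
  rw [quotientTerm, prod_eq_zero (i := p) (by simp only [mem_Icc]; omega) (ZMod.natCast_self p),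
    zero_mul]

theorem quotientTerm_eq_zero_of_le {p t r : ℕ} (hp : 0 < p) (h : p ≤ r + 1) :
    quotientTerm p t r = 0 := by
  rw [quotientTerm, (ZMod.natCast_eq_zero_iff _ p).2 (Nat.dvd_factorial hp h), mul_zero]

theorem quotientTerm_sub_two_sub {p t m : ℕ} [Fact p.Prime] (hm : m < t) (ht : t < p) :
    quotientTerm p t (p - 2 - m) = -((-1) ^ m * ((t - 1).choose m : ZMod p)) := by
  have hIcc : Icc (p - 2 - m + t + 2) (p + t - 1) = Ico (p + (t - m)) (p + (t - m) + m) := by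
    ext
    simp only [mem_Icc, mem_Ico]
    omega
  have hasc : (t - m).ascFactorial m = m ! * (t - 1).choose m := by
    rw [show t - m = t - 1 - m + 1 by omega, ascFactorial_eq_factorial_mul_choose,
      show t - 1 - m + m = t - 1 by omega]
  rw [quotientTerm, hIcc, ZMod.prod_Ico_add_self_natCast, hasc,
    show p - 2 - m + 1 = p - 1 - m by omega]
  push_cast
  linear_combination ((t - 1).choose m : ZMod p) *
    ZMod.factorial_mul_factorial_sub_one_sub (p := p) (m := m) (by omega)

theorem sum_quotientTerm_eq_zero {p t : ℕ} [Fact p.Prime] (ht : 2 ≤ t) (htp : t + 2 ≤ p) :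
    ∑ r ∈ Icc 1 (p - 1), quotientTerm p t r = 0 := by
  have hsupport : ∑ r ∈ Icc 1 (p - 1), quotientTerm p t r
      = ∑ r ∈ Ico (p - 1 - t) (p - 1), quotientTerm p t r := by
    refine (sum_subset (fun r hr => ?_) fun r hr hr' => ?_).symm
    · simp only [mem_Icc, mem_Ico] at hr ⊢
      omega
    · simp only [mem_Icc, mem_Ico, not_and_or, not_le, not_lt] at hr hr'
      rcases hr' with hsmall | hlast
      · exact quotientTerm_eq_zero_of_add_le (by omega) (by omega)
      · exact quotientTerm_eq_zero_of_le (by omega) (by omega)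
  have hreflect := sum_Ico_reflect (quotientTerm p t) 0 (n := p - 2) (m := t) (by omega)
  rw [show p - 2 + 1 = p - 1 by omega, tsub_zero, ← range_eq_Ico] at hreflect
  rw [hsupport, ← hreflect,
    sum_congr rfl fun m hm => quotientTerm_sub_two_sub (mem_range.1 hm) (by omega),
    sum_neg_distrib, neg_eq_zero]
  have halt := congrArg (Int.cast : ℤ → ZMod p)
    (Int.alternating_sum_range_choose_of_ne (n := t - 1) (by omega))
  rw [show t - 1 + 1 = t by omega] at halt
  push_cast at halt
  exact halt

/-- `∑_{r=1}^{p-1} (p+t-1)!/(r+t+1)! · (r+1)! = 0` in `F_p`, where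
`(p+t-1)!/(r+t+1)!` denotes the product of the integers from `r+t+2` to `p+t-1`. -/
theorem stmt5 {p : ℕ} (hp : p.Prime) (hp3 : 3 < p) (t : ℕ)
    (ht : 3 * t = if p % 3 = 1 then 2 * p + 1 else p + 1) :
    ∑ r ∈ Finset.Icc 1 (p - 1),
      (∏ i ∈ Finset.Icc (r + t + 2) (p + t - 1), (i : ZMod p)) * ((r + 1).factorial : ZMod p)
      = 0 := by
  have := Fact.mk hp
  have hmod : p % 3 ≠ 0 := fun h => by
    have := (Nat.prime_dvd_prime_iff_eq Nat.prime_three hp).1 (Nat.dvd_of_mod_eq_zero h)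
    omega
  have hp4 : p ≠ 4 := by
    rintro rfl
    norm_num at hp
  have hbounds : 2 ≤ t ∧ t + 2 ≤ p := by
    split_ifs at ht <;> omega
  exact sum_quotientTerm_eq_zero hbounds.1 hbounds.2
end

section
/- In F_p, Σ_{r=1}^{p-1} 3r·(p+t)! / (2·(r+t+1)·t!) = 2, where t is the integer inverse of 3 as above and the summand is interpreted as follows: for r + t + 1 ≢ 0 (mod p) the term vanishes in F_p because p divides (p+t)!/t! · 1/(r+t+1) appropriately; the whole sum equals 3(p-t-1)(p+t)!/(2p·t!), which reduces to 2 in F_p. (This is the computation α(p) = 2.) -/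
/-!
Modulo `p` exactly one factor `3k + 1` of `∏_{k ≤ p} (3k + 1)` vanishes, namely the one at
`k = p - t`, because `3t ≡ 1`. So only the term `r = p - t - 1` survives, and there `3r ≡ -4`.
Its product omits the zero factor; since `x ↦ 3x + 1` permutes `ZMod p`, it is the product of
all nonzero residues, which is `-1` by Wilson's theorem. Hence `α(p) = (-4)(-1)/2 = 2`.
-/

open Finset

theorem FiniteField.prod_univ_erase_zero {K : Type*} [Field K] [Fintype K] [DecidableEq K] :
    ∏ x ∈ univ.erase (0 : K), x = -1 := by
  have h := congrArg Units.val (FiniteField.prod_univ_units_id_eq_neg_one (K := K))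
  rw [Units.coe_prod, Units.val_neg, Units.val_one] at h
  rw [← h, prod_subtype (univ.erase 0) (p := (· ≠ (0 : K))) (by simp)]
  exact (Fintype.prod_equiv unitsEquivNeZero _ _ fun _ => rfl).symm

theorem FiniteField.prod_univ_erase_root_affine {K : Type*} [Field K] [Fintype K] [DecidableEq K]
    {a b x₀ : K} (ha : a ≠ 0) (hx₀ : a * x₀ + b = 0) :
    ∏ x ∈ univ.erase x₀, (a * x + b) = -1 := by
  rw [← FiniteField.prod_univ_erase_zero (K := K)]
  refine prod_equiv ((Equiv.mulLeft₀ a ha).trans (Equiv.addRight b)) (fun x => ?_) fun _ _ => rfl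
  simp only [mem_erase, mem_univ, and_true, Equiv.trans_apply, Equiv.mulLeft₀_apply,
    Equiv.coe_addRight]
  rw [← hx₀, (add_left_injective b).ne_iff, (mul_right_injective₀ ha).ne_iff]

theorem ZMod.natCast_ne_zero_of_lt {n p : ℕ} (h0 : n ≠ 0) (h : n < p) : (n : ZMod p) ≠ 0 := by
  rw [Ne, ZMod.natCast_eq_zero_iff]
  exact Nat.not_dvd_of_pos_of_lt (Nat.pos_of_ne_zero h0) h

theorem ZMod.prod_range_erase_natCast {M : Type*} [CommMonoid M] {p m : ℕ} [NeZero p]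
    (hm : m < p) (f : ZMod p → M) :
    ∏ k ∈ (range p).erase m, f k = ∏ x ∈ univ.erase (m : ZMod p), f x := by
  refine prod_nbij' (fun k => (k : ZMod p)) ZMod.val ?_ ?_ ?_ ?_ fun _ _ => rfl
  · intro k hk
    simp only [mem_erase, mem_range] at hk
    simp only [mem_erase, mem_univ, and_true]
    intro h
    have := congrArg ZMod.val h
    rw [ZMod.val_cast_of_lt hk.2, ZMod.val_cast_of_lt hm] at this
    exact hk.1 this
  · intro x hx
    simp only [mem_erase, mem_univ, and_true] at hx
    simp only [mem_erase, mem_range, ZMod.val_lt, and_true]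
    rintro rfl
    exact hx (ZMod.natCast_zmod_val x).symm
  · intro k hk
    exact ZMod.val_cast_of_lt (mem_range.1 (mem_of_mem_erase hk))
  · intro x _
    exact ZMod.natCast_zmod_val x

theorem ZMod.prod_range_erase_root_affine {p m : ℕ} [Fact p.Prime] {a b : ZMod p}
    (ha : a ≠ 0) (hm : m < p) (hroot : a * m + b = 0) :
    ∏ k ∈ (range p).erase m, (a * k + b) = -1 := by
  rw [ZMod.prod_range_erase_natCast hm (fun x => a * x + b)]
  exact FiniteField.prod_univ_erase_root_affine ha hroot

/-- `α(p) = ∑_{r=1}^{p-1} 3r·(3p+1)!!!/(2(3r+4)) ≡ 2 (mod p)`, where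
`(3p+1)!!! = ∏_{k=0}^{p} (3k+1)` and `(3p+1)!!!/(3r+4)` is the integer obtained by
removing the factor `3r+4 = 3(r+1)+1` from this product. -/
theorem stmt8 {p : ℕ} [Fact p.Prime] (hp3 : 3 < p) (t : ℕ)
    (ht : 3 * t = if p % 3 = 1 then 2 * p + 1 else p + 1) :
    ∑ r ∈ Finset.Icc 1 (p - 1),
      ((3 * r : ℕ) : ZMod p)
        * (∏ k ∈ (Finset.range (p + 1)).erase (r + 1), ((3 * k + 1 : ℕ) : ZMod p)) / (2 : ZMod p)
      = 2 := by
  obtain ⟨ht2, htp⟩ : 2 ≤ t ∧ t + 2 ≤ p := by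
    have : p ≠ 4 := by rintro rfl; exact absurd Fact.out (by decide : ¬ Nat.Prime 4)
    split_ifs at ht <;> omega
  have hp : (p : ZMod p) = 0 := ZMod.natCast_self p
  have h2 : (2 : ZMod p) ≠ 0 := by
    exact_mod_cast ZMod.natCast_ne_zero_of_lt two_ne_zero (by omega)
  have h3 : (3 : ZMod p) ≠ 0 := by exact_mod_cast ZMod.natCast_ne_zero_of_lt three_ne_zero hp3
  have hroot : 3 * ((p - t : ℕ) : ZMod p) + 1 = 0 := by
    have h3t := congrArg (Nat.cast : ℕ → ZMod p) ht
    rw [Nat.cast_sub (by omega), hp]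
    split_ifs at h3t <;> push_cast [hp] at h3t <;> linear_combination -h3t
  push_cast
  rw [Finset.sum_eq_single_of_mem (p - t - 1) (by simp; omega)]
  · rw [show p - t - 1 + 1 = p - t by omega, Finset.range_add_one,
      Finset.erase_insert_of_ne (by omega), Finset.prod_insert (by simp),
      ZMod.prod_range_erase_root_affine h3 (by omega) hroot,
      Nat.cast_sub (by omega : 1 ≤ p - t), div_eq_iff h2, hp]
    linear_combination -hroot
  · intro r _ hr
    rw [Finset.prod_eq_zero (i := p - t) (by simp; omega) hroot, mul_zero, zero_div]
end

section
/- In F_p, Σ_{r=1}^{p-1} Σ_{n=1}^{r-1} [(p+t)!/(r+t+1)!] · [(r+1)!/(n+1)!] · [(n+2t)!/(2t)!] ≡ 0 (mod p), where all bracketed quotients are interpreted as the integer products of consecutive integers they represent, and t is the integer with 3t ≡ 1 (mod p), t = (2p+1)/3 or (p+1)/3 according as p ≡ 1 or 2 (mod 3). (This is the claim β₁(p) = 0.) -/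
/-!
Write `A r = (p+t)!/(r+t+1)!`, `C n = (n+2t)!/(2t)!`. Since `3t = 1`, the elements `2t`, `1 - t`, `t + 1`
of `𝔽_p` are nonzero. After multiplying by `2t` the inner sum telescopes, with potential
`g n = (r+1)!/n! · C n`, giving `(r+1) C r - (2t+1) (r+1)!`. The two resulting outer sums telescope
as well, with potentials `A r (r+1)! (r+2)` (increments `(1-t) A r (r+1)!`) and `A r C r r (r+2t+1)`
(increments `(t+1) A r (r+1) C r`). Their boundary values vanish mod `p`, since each contains a
product of `p - 1` consecutive integers following `c ∈ {1, t+1, 2t}`, and `c ≢ 0`.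
-/

open Finset

theorem sum_Icc_one_sub_pred {M : Type*} [AddCommGroup M] (f : ℕ → M) (m : ℕ) :
    ∑ r ∈ Icc 1 m, (f r - f (r - 1)) = f m - f 0 := by
  induction m with
  | zero => simp
  | succ m ih => rw [sum_Icc_succ_top (by omega), ih, Nat.add_sub_cancel]; abel

/-- `a (a + 1) ⋯ b`, the paper's `b! / (a - 1)!`. -/
def consecutiveProd (R : Type*) [CommRing R] (a b : ℕ) : R := ∏ i ∈ Icc a b, (i : R)

section CommRing

variable {R : Type*} [CommRing R]

theorem consecutiveProd_self (a : ℕ) : consecutiveProd R a a = a := by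
  simp [consecutiveProd]

theorem consecutiveProd_succ {a b : ℕ} (h : a ≤ b + 1) :
    consecutiveProd R a (b + 1) = consecutiveProd R a b * (b + 1) := by
  rw [consecutiveProd, prod_Icc_succ_top h, Nat.cast_succ, consecutiveProd]

theorem consecutiveProd_eq_mul {a b : ℕ} (h : a ≤ b) :
    consecutiveProd R a b = a * consecutiveProd R (a + 1) b := by
  rw [consecutiveProd, ← insert_Icc_add_one_left_eq_Icc h, prod_insert (by simp), consecutiveProd]

theorem natCast_mul_sum_consecutiveProd_mul_consecutiveProd {c r : ℕ} (hr : 1 ≤ r) :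
    (c : R) * ∑ n ∈ Icc 1 (r - 1),
        consecutiveProd R (n + 2) (r + 1) * consecutiveProd R (c + 1) (n + c)
      = (r + 1) * consecutiveProd R (c + 1) (r + c) - (c + 1) * consecutiveProd R 2 (r + 1) := by
  set g : ℕ → R := fun n ↦ consecutiveProd R (n + 2) (r + 1) * consecutiveProd R (c + 1) (n + 1 + c)
  have step : ∀ n ∈ Icc 1 (r - 1), (c : R) * (consecutiveProd R (n + 2) (r + 1) *
      consecutiveProd R (c + 1) (n + c)) = g n - g (n - 1) := by
    intro n hn
    obtain ⟨hn1, hnr⟩ := mem_Icc.mp hn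
    obtain ⟨k, rfl⟩ : ∃ k, n = k + 1 := ⟨n - 1, by omega⟩
    simp only [g, Nat.add_sub_cancel, show k + 1 + 1 + c = k + 1 + c + 1 by ring,
      consecutiveProd_succ (show c + 1 ≤ k + 1 + c + 1 by omega),
      consecutiveProd_eq_mul (show k + 2 ≤ r + 1 by omega)]
    push_cast
    ring
  rw [mul_sum, sum_congr rfl step, sum_Icc_one_sub_pred]
  simp only [g, Nat.sub_add_cancel hr, show r - 1 + 2 = r + 1 by omega, zero_add,
    consecutiveProd_self, show 1 + c = c + 1 by ring]
  push_cast
  ring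

theorem one_sub_mul_sum_consecutiveProd_mul_consecutiveProd {t N m : ℕ} (hm : m + t + 1 ≤ N) :
    (1 - t : R) * ∑ r ∈ Icc 1 m, consecutiveProd R (r + t + 2) N * consecutiveProd R 2 (r + 1)
      = consecutiveProd R (m + t + 2) N * consecutiveProd R 2 (m + 1) * (m + 2)
        - consecutiveProd R (t + 2) N * 2 := by
  set u : ℕ → R := fun r ↦ consecutiveProd R (r + t + 2) N * consecutiveProd R 2 (r + 1) * (r + 2)
  have step : ∀ r ∈ Icc 1 m, (1 - t : R) *
      (consecutiveProd R (r + t + 2) N * consecutiveProd R 2 (r + 1)) = u r - u (r - 1) := by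
    intro r hr
    obtain ⟨hr1, hrm⟩ := mem_Icc.mp hr
    obtain ⟨k, rfl⟩ : ∃ k, r = k + 1 := ⟨r - 1, by omega⟩
    simp only [u, Nat.add_sub_cancel, show k + 1 + t + 2 = k + t + 2 + 1 by ring,
      consecutiveProd_eq_mul (show k + t + 2 ≤ N by omega),
      consecutiveProd_succ (show 2 ≤ k + 1 + 1 by omega)]
    push_cast
    ring
  rw [mul_sum, sum_congr rfl step, sum_Icc_one_sub_pred]
  simp [u, consecutiveProd]

theorem add_one_mul_sum_consecutiveProd_mul_consecutiveProd {t N m : ℕ} (hm : m + t + 1 ≤ N) :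
    (t + 1 : R) * ∑ r ∈ Icc 1 m,
        consecutiveProd R (r + t + 2) N * ((r + 1) * consecutiveProd R (2 * t + 1) (r + 2 * t))
      = consecutiveProd R (m + t + 2) N * consecutiveProd R (2 * t + 1) (m + 2 * t)
        * m * (m + 2 * t + 1) := by
  set w : ℕ → R := fun r ↦ consecutiveProd R (r + t + 2) N
    * consecutiveProd R (2 * t + 1) (r + 2 * t) * r * (r + 2 * t + 1)
  have step : ∀ r ∈ Icc 1 m, (t + 1 : R) * (consecutiveProd R (r + t + 2) N
      * ((r + 1) * consecutiveProd R (2 * t + 1) (r + 2 * t))) = w r - w (r - 1) := by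
    intro r hr
    obtain ⟨hr1, hrm⟩ := mem_Icc.mp hr
    obtain ⟨k, rfl⟩ : ∃ k, r = k + 1 := ⟨r - 1, by omega⟩
    simp only [w, Nat.add_sub_cancel, show k + 1 + t + 2 = k + t + 2 + 1 by ring,
      show k + 1 + 2 * t = k + 2 * t + 1 by ring,
      consecutiveProd_eq_mul (show k + t + 2 ≤ N by omega),
      consecutiveProd_succ (show 2 * t + 1 ≤ k + 2 * t + 1 by omega)]
    push_cast
    ring
  rw [mul_sum, sum_congr rfl step, sum_Icc_one_sub_pred]
  simp [w]

theorem two_mul_sum_sum_consecutiveProd {t N m : ℕ} :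
    (2 * t : R) * ∑ r ∈ Icc 1 m, ∑ n ∈ Icc 1 (r - 1), consecutiveProd R (r + t + 2) N
        * consecutiveProd R (n + 2) (r + 1) * consecutiveProd R (2 * t + 1) (n + 2 * t)
      = ∑ r ∈ Icc 1 m, consecutiveProd R (r + t + 2) N
          * ((r + 1) * consecutiveProd R (2 * t + 1) (r + 2 * t))
        - (2 * t + 1) * ∑ r ∈ Icc 1 m, consecutiveProd R (r + t + 2) N
          * consecutiveProd R 2 (r + 1) := by
  rw [mul_sum, mul_sum, ← sum_sub_distrib]
  refine sum_congr rfl fun r hr ↦ ?_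
  have inner := natCast_mul_sum_consecutiveProd_mul_consecutiveProd (R := R) (c := 2 * t)
    (mem_Icc.mp hr).1
  push_cast at inner
  simp only [mul_assoc, ← mul_sum]
  linear_combination consecutiveProd R (r + t + 2) N * inner

end CommRing

theorem consecutiveProd_zmod_eq_zero {p c : ℕ} [NeZero p] (hc : (c : ZMod p) ≠ 0) :
    consecutiveProd (ZMod p) (c + 1) (c + (p - 1)) = 0 := by
  have hmod : c % p ≠ 0 := fun h ↦ hc ((ZMod.natCast_eq_zero_iff c p).mpr (Nat.dvd_of_mod_eq_zero h))
  have hlt : c % p < p := Nat.mod_lt c (NeZero.pos p)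
  refine prod_eq_zero (i := c + (p - c % p)) (mem_Icc.mpr ⟨by omega, by omega⟩) ?_
  rw [ZMod.natCast_eq_zero_iff]
  exact ⟨c / p + 1, by have := Nat.div_add_mod c p; rw [Nat.mul_succ]; omega⟩

section ZModPrime

variable {p : ℕ} [Fact p.Prime]

theorem sum_consecutiveProd_mul_factorial_zmod_eq_zero {t : ℕ} (ht1 : (t : ZMod p) ≠ 1)
    (ht : (t : ZMod p) + 1 ≠ 0) :
    ∑ r ∈ Icc 1 (p - 1), consecutiveProd (ZMod p) (r + t + 2) (p + t)
      * consecutiveProd (ZMod p) 2 (r + 1) = 0 := by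
  have hp := (Fact.out : p.Prime).one_lt
  have hfac : consecutiveProd (ZMod p) 2 (p - 1 + 1) = 0 := by
    have := consecutiveProd_zmod_eq_zero (p := p) (c := 1) (by simp)
    rwa [show 1 + (p - 1) = p - 1 + 1 by omega] at this
  have hhead : consecutiveProd (ZMod p) (t + 2) (p + t) = 0 := by
    have := consecutiveProd_zmod_eq_zero (p := p) (c := t + 1) (by exact_mod_cast ht)
    rwa [show t + 1 + (p - 1) = p + t by omega] at this
  have h := one_sub_mul_sum_consecutiveProd_mul_consecutiveProd (R := ZMod p)
    (show p - 1 + t + 1 ≤ p + t by omega)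
  rw [hfac, hhead, mul_zero, zero_mul, zero_mul, sub_zero] at h
  exact (mul_eq_zero.mp h).resolve_left (sub_ne_zero.mpr ht1.symm)

theorem sum_consecutiveProd_mul_consecutiveProd_zmod_eq_zero {t : ℕ} (ht : (t : ZMod p) + 1 ≠ 0)
    (ht2 : (2 * t : ZMod p) ≠ 0) :
    ∑ r ∈ Icc 1 (p - 1), consecutiveProd (ZMod p) (r + t + 2) (p + t)
      * ((r + 1) * consecutiveProd (ZMod p) (2 * t + 1) (r + 2 * t)) = 0 := by
  have hp := (Fact.out : p.Prime).one_lt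
  have htail : consecutiveProd (ZMod p) (2 * t + 1) (p - 1 + 2 * t) = 0 := by
    have := consecutiveProd_zmod_eq_zero (p := p) (c := 2 * t) (by exact_mod_cast ht2)
    rwa [add_comm (2 * t) (p - 1)] at this
  have h := add_one_mul_sum_consecutiveProd_mul_consecutiveProd (R := ZMod p)
    (show p - 1 + t + 1 ≤ p + t by omega)
  rw [htail, mul_zero, zero_mul, zero_mul] at h
  exact (mul_eq_zero.mp h).resolve_left ht

end ZModPrime

/-- β₁(p) = 0:
`∑_{r=1}^{p-1} ∑_{n=1}^{r-1} (p+t)!/(r+t+1)! · (r+1)!/(n+1)! · (n+2t)!/(2t)! ≡ 0 (mod p)`,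
where each factorial quotient `a!/b!` denotes the product of the integers from `b+1` to `a`. -/
theorem stmt10 {p : ℕ} (hp : p.Prime) (hp3 : 3 < p) (t : ℕ)
    (ht : 3 * t = if p % 3 = 1 then 2 * p + 1 else p + 1) :
    ∑ r ∈ Finset.Icc 1 (p - 1), ∑ n ∈ Finset.Icc 1 (r - 1),
      (∏ i ∈ Finset.Icc (r + t + 2) (p + t), (i : ZMod p))
        * (∏ i ∈ Finset.Icc (n + 2) (r + 1), (i : ZMod p))
        * (∏ i ∈ Finset.Icc (2 * t + 1) (n + 2 * t), (i : ZMod p))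
      = 0 := by
  have := Fact.mk hp
  have h3t : 3 * (t : ZMod p) = 1 := by
    have h := congrArg (Nat.cast : ℕ → ZMod p) ht
    split_ifs at h <;> push_cast [ZMod.natCast_self] at h <;> linear_combination h
  have h2 : (2 : ZMod p) ≠ 0 := by
    intro h
    have := (ZMod.natCast_eq_zero_iff 2 p).mp (by exact_mod_cast h)
    exact absurd (Nat.le_of_dvd two_pos this) (by omega)
  have ht1 : (t : ZMod p) ≠ 1 := fun h ↦ h2 (by linear_combination h3t - 3 * h)
  have ht2 : (2 * t : ZMod p) ≠ 0 := fun h ↦ h2 (by linear_combination 3 * h - 2 * h3t)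
  have ht3 : (t : ZMod p) + 1 ≠ 0 := fun h ↦ mul_ne_zero h2 h2 (by linear_combination 3 * h - h3t)
  refine (mul_eq_zero.mp ?_).resolve_left ht2
  change (2 * t : ZMod p) * ∑ r ∈ Icc 1 (p - 1), ∑ n ∈ Icc 1 (r - 1),
    consecutiveProd (ZMod p) (r + t + 2) (p + t) * consecutiveProd (ZMod p) (n + 2) (r + 1)
      * consecutiveProd (ZMod p) (2 * t + 1) (n + 2 * t) = 0
  rw [two_mul_sum_sum_consecutiveProd, sum_consecutiveProd_mul_consecutiveProd_zmod_eq_zero ht3 ht2,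
    sum_consecutiveProd_mul_factorial_zmod_eq_zero ht1 ht3, mul_zero, sub_zero]
end

section
/- In F_p, Σ_{r=1}^{p-1} [(p+t)!/(r+t+1)!] · [(r+2t)!/(2t)!] ≡ 0 (mod p), where t is the integer inverse of 3 mod p as above and the quotients denote integer products of consecutive integers. -/
/-!
Summation by parts. With `w r = (p+t)!/(r+t)! · (r+2t)!/(2t)!`, the difference `w (r+1) - w r`
is the `r`-th summand times `(r+2t+1) - (r+t+1) = t`, and `t` is the inverse of `3` mod `p`.
So the sum telescopes to `3 (w p - w 1)`, and both boundary terms vanish: `w 1` contains the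
factor `p`, and `w p` contains the `p` consecutive integers `2t+1, …, 2t+p`.
-/

open Finset

section SummationByParts

variable (R : Type*) [CommRing R]

/-- `b!/(r+a)! · (r+c)!/c!`, with `m!/n!` read as the product `(n+1)⋯m`. -/
def factorialQuotientWeight (a b c r : ℕ) : R :=
  (∏ i ∈ Icc (r + a + 1) b, (i : R)) * ∏ i ∈ Icc (c + 1) (r + c), (i : R)

variable {R}

theorem factorialQuotientWeight_succ_sub {a b c r : ℕ} (h : r + a < b) :
    factorialQuotientWeight R a b c (r + 1) - factorialQuotientWeight R a b c r
      = (∏ i ∈ Icc (r + a + 2) b, (i : R)) * (∏ i ∈ Icc (c + 1) (r + c), (i : R))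
          * ((c : R) - a) := by
  unfold factorialQuotientWeight
  rw [← insert_Icc_add_one_left_eq_Icc (show r + a + 1 ≤ b by omega), prod_insert (by simp),
    show r + 1 + a + 1 = r + a + 1 + 1 by omega, show r + 1 + c = r + c + 1 by omega,
    prod_Icc_succ_top (by omega)]
  push_cast
  ring

theorem sum_Ico_eq_factorialQuotientWeight_sub {a b c m n : ℕ} (hmn : m ≤ n)
    (hnb : n + a ≤ b) :
    ∑ r ∈ Ico m n, (∏ i ∈ Icc (r + a + 2) b, (i : R)) * (∏ i ∈ Icc (c + 1) (r + c), (i : R))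
        * ((c : R) - a)
      = factorialQuotientWeight R a b c n - factorialQuotientWeight R a b c m := by
  rw [← sum_Ico_sub _ hmn]
  refine sum_congr rfl fun r hr => (factorialQuotientWeight_succ_sub ?_).symm
  have := (mem_Ico.mp hr).2
  omega

end SummationByParts

theorem prod_Icc_natCast_consecutive_eq_zero {p : ℕ} (hp : 0 < p) (a : ℕ) :
    ∏ i ∈ Icc (a + 1) (p + a), (i : ZMod p) = 0 := by
  have hlt := Nat.lt_mul_div_succ a hp
  have hle := Nat.mul_div_le a p
  refine prod_eq_zero (i := p * (a / p + 1)) (mem_Icc.mpr ⟨hlt, ?_⟩) ?_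
  · rw [mul_add_one]
    omega
  · rw [ZMod.natCast_eq_zero_iff]
    exact dvd_mul_right p _

/-- `∑_{r=1}^{p-1} (p+t)!/(r+t+1)! · (r+2t)!/(2t)! ≡ 0 (mod p)`,
where each factorial quotient `a!/b!` denotes the product of the integers from `b+1` to `a`. -/
theorem stmt11 {p : ℕ} (hp : p.Prime) (hp3 : 3 < p) (t : ℕ)
    (ht : 3 * t = if p % 3 = 1 then 2 * p + 1 else p + 1) :
    ∑ r ∈ Finset.Icc 1 (p - 1),
      (∏ i ∈ Finset.Icc (r + t + 2) (p + t), (i : ZMod p))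
        * (∏ i ∈ Finset.Icc (2 * t + 1) (r + 2 * t), (i : ZMod p))
      = 0 := by
  have hp4 : p ≠ 4 := by rintro rfl; norm_num at hp
  have ht' : 3 * t = 2 * p + 1 ∨ 3 * t = p + 1 := by split_ifs at ht <;> omega
  have h3t : (3 : ZMod p) * t = 1 := by
    obtain ⟨k, hk⟩ : ∃ k, 3 * t = p * k + 1 := by
      rcases ht' with h | h
      exacts [⟨2, by omega⟩, ⟨1, by omega⟩]
    simpa using congrArg (Nat.cast : ℕ → ZMod p) hk
  have hw1 : factorialQuotientWeight (ZMod p) t (p + t) (2 * t) 1 = 0 := by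
    refine mul_eq_zero_of_left (prod_eq_zero (i := p) ?_ (ZMod.natCast_self p)) _
    rw [mem_Icc]
    omega
  have hwp : factorialQuotientWeight (ZMod p) t (p + t) (2 * t) p = 0 :=
    mul_eq_zero_of_right _ (prod_Icc_natCast_consecutive_eq_zero hp.pos _)
  have hIcc : Icc 1 (p - 1) = Ico 1 p := by
    rw [← Ico_add_one_right_eq_Icc, Nat.sub_add_cancel hp.one_le]
  calc _ = 3 * ∑ r ∈ Ico 1 p, (∏ i ∈ Icc (r + t + 2) (p + t), (i : ZMod p))
              * (∏ i ∈ Icc (2 * t + 1) (r + 2 * t), (i : ZMod p))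
              * (((2 * t : ℕ) : ZMod p) - t) := by
        rw [hIcc, mul_sum]
        refine sum_congr rfl fun r _ => ?_
        push_cast
        linear_combination (-(∏ i ∈ Icc (r + t + 2) (p + t), (i : ZMod p))
              * (∏ i ∈ Icc (2 * t + 1) (r + 2 * t), (i : ZMod p))) * h3t
    _ = 0 := by
        rw [sum_Ico_eq_factorialQuotientWeight_sub hp.one_le (by omega), hwp, hw1, sub_zero,
          mul_zero]
end

section
/- Let the sequences A_m, B_m, C_m (coefficients of X^{3m+1}, X^{3m+2}, X^{3m+3} in Δ_m for f(X) = X + a₁X⁴ + a₂X⁵ + a₃X⁶ + ... with Δ_1 = f - X, Δ_{m+1} = Δ_m∘f - Δ_m) satisfy the closed forms: A_m = a₁^m (3m-2)!!!, and B_m = a₂ a₁^{m-1} ((3m-1)!!! + Σ_{r=1}^{m-1} (3r+1)!!!(3m-1)!!!/(3r+2)!!!), as identities in F_p for all m ≥ 1. -/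
/-!
Both closed forms follow by induction on `m` from the recurrences. For `A` this is immediate
from `(3m+1)!!! = (3m+1) (3m-2)!!!`. For `B`, writing `S_m` for the bracket in its closed form,
the recurrence for `B` reduces to `S_{m+1} = (3m+2) S_m + (3m+1)!!!`: multiplying by `3m+2`
turns `(3m-1)!!!` into `(3m+2)!!!` and extends each product `(3r+5)⋯(3m-1)` by one factor,
while the new summand `r = m` is `(3m+1)!!!` times an empty product.
-/

def tripleFact : ℕ → ℕ
  | 0 => 1
  | 1 => 1
  | 2 => 1
  | (n + 3) => (n + 3) * tripleFact n

open Finset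

theorem tripleFact_add_three (n : ℕ) : tripleFact (n + 3) = (n + 3) * tripleFact n := rfl

/-- The bracket in the closed form of `B_{k+1}`, i.e. `S_{k+1}` with the index shifted so
that no natural subtraction occurs. -/
def tripleFactSum (R : Type*) [CommRing R] (k : ℕ) : R :=
  (tripleFact (3 * k + 2) : R)
    + ∑ r ∈ Icc 1 k, (tripleFact (3 * r + 1) : R)
        * ∏ j ∈ range (k - r), ((3 * r + 5 + 3 * j : ℕ) : R)

section ClosedForms

variable {R : Type*} [CommRing R]

theorem tripleFactSum_succ (k : ℕ) :
    tripleFactSum R (k + 1)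
      = ((3 * k + 5 : ℕ) : R) * tripleFactSum R k + (tripleFact (3 * k + 4) : R) := by
  have hprod : ∀ r ∈ Icc 1 k, ∏ j ∈ range (k + 1 - r), ((3 * r + 5 + 3 * j : ℕ) : R)
      = ((3 * k + 5 : ℕ) : R) * ∏ j ∈ range (k - r), ((3 * r + 5 + 3 * j : ℕ) : R) := by
    intro r hr
    have hrk : r ≤ k := (mem_Icc.mp hr).2
    rw [show k + 1 - r = k - r + 1 by omega, prod_range_succ,
      show 3 * r + 5 + 3 * (k - r) = 3 * k + 5 by omega, mul_comm]
  unfold tripleFactSum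
  rw [sum_Icc_succ_top (by omega), sum_congr rfl fun r hr => by rw [hprod r hr],
    Nat.sub_self, prod_range_zero, show 3 * (k + 1) + 2 = 3 * k + 2 + 3 by ring,
    show 3 * (k + 1) + 1 = 3 * k + 4 by ring, tripleFact_add_three]
  simp only [mul_left_comm _ ((3 * k + 5 : ℕ) : R), ← mul_sum]
  push_cast
  ring

variable {a1 a2 : R} {A B : ℕ → R}

theorem eq_pow_mul_tripleFact_of_rec (hA1 : A 1 = a1)
    (hA : ∀ m ≥ 1, A (m + 1) = a1 * ((3 * m + 1 : ℕ) : R) * A m) (k : ℕ) :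
    A (k + 1) = a1 ^ (k + 1) * (tripleFact (3 * k + 1) : R) := by
  induction k with
  | zero => simp [hA1, tripleFact]
  | succ k ih =>
    rw [hA (k + 1) (by omega), ih, show 3 * (k + 1) + 1 = 3 * k + 1 + 3 by ring,
      tripleFact_add_three]
    push_cast
    ring

theorem eq_mul_tripleFactSum_of_rec
    (hA : ∀ k, A (k + 1) = a1 ^ (k + 1) * (tripleFact (3 * k + 1) : R)) (hB1 : B 1 = a2)
    (hB : ∀ m ≥ 1, B (m + 1) = a2 * ((3 * m + 1 : ℕ) : R) * A m
        + a1 * ((3 * m + 2 : ℕ) : R) * B m) (k : ℕ) :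
    B (k + 1) = a2 * a1 ^ k * tripleFactSum R k := by
  induction k with
  | zero => simp [hB1, tripleFactSum, tripleFact]
  | succ k ih =>
    rw [hB (k + 1) (by omega), hA, ih, tripleFactSum_succ,
      show 3 * k + 4 = 3 * k + 1 + 3 by ring, tripleFact_add_three]
    push_cast
    ring

end ClosedForms

theorem stmt16_general {p : ℕ} (a1 a2 : ZMod p)
    (A B : ℕ → ZMod p) (hA1 : A 1 = a1) (hB1 : B 1 = a2)
    (hA : ∀ m ≥ 1, A (m + 1) = a1 * ((3 * m + 1 : ℕ) : ZMod p) * A m)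
    (hB : ∀ m ≥ 1, B (m + 1) = a2 * ((3 * m + 1 : ℕ) : ZMod p) * A m
        + a1 * ((3 * m + 2 : ℕ) : ZMod p) * B m) :
    ∀ m ≥ 1,
      A m = a1 ^ m * (tripleFact (3 * m - 2) : ZMod p) ∧
      B m = a2 * a1 ^ (m - 1) * ((tripleFact (3 * m - 1) : ZMod p)
        + ∑ r ∈ Finset.Icc 1 (m - 1), (tripleFact (3 * r + 1) : ZMod p)
            * ∏ j ∈ Finset.range (m - 1 - r), ((3 * r + 5 + 3 * j : ℕ) : ZMod p)) := by
  intro m hm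
  obtain ⟨k, rfl⟩ := Nat.exists_eq_add_of_le' hm
  have hAk := eq_pow_mul_tripleFact_of_rec hA1 hA
  rw [show 3 * (k + 1) - 2 = 3 * k + 1 by omega, show 3 * (k + 1) - 1 = 3 * k + 2 by omega,
    Nat.add_sub_cancel]
  exact ⟨hAk k, eq_mul_tripleFactSum_of_rec hAk hB1 hB k⟩

/-- the sequences `A_m, B_m` (satisfying the recurrence coming from the
coefficients of `Δ_m`) have the closed forms `A_m = a₁^m (3m-2)!!!` and
`B_m = a₂ a₁^{m-1} ((3m-1)!!! + ∑_{r=1}^{m-1} (3r+1)!!! (3m-1)!!!/(3r+2)!!!)`, where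
`(3m-1)!!!/(3r+2)!!!` denotes the product `(3r+5)(3r+8)⋯(3m-1)`. -/
theorem stmt16 {p : ℕ} (hp : p.Prime) (hp3 : 3 < p) (a1 a2 : ZMod p)
    (A B : ℕ → ZMod p) (hA1 : A 1 = a1) (hB1 : B 1 = a2)
    (hA : ∀ m ≥ 1, A (m + 1) = a1 * ((3 * m + 1 : ℕ) : ZMod p) * A m)
    (hB : ∀ m ≥ 1, B (m + 1) = a2 * ((3 * m + 1 : ℕ) : ZMod p) * A m
        + a1 * ((3 * m + 2 : ℕ) : ZMod p) * B m) :
    ∀ m ≥ 1,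
      A m = a1 ^ m * (tripleFact (3 * m - 2) : ZMod p) ∧
      B m = a2 * a1 ^ (m - 1) * ((tripleFact (3 * m - 1) : ZMod p)
        + ∑ r ∈ Finset.Icc 1 (m - 1), (tripleFact (3 * r + 1) : ZMod p)
            * ∏ j ∈ Finset.range (m - 1 - r), ((3 * r + 5 + 3 * j : ℕ) : ZMod p)) :=
  stmt16_general a1 a2 A B hA1 hB1 hA hB
end

section
/- Let p be an odd prime, b a positive integer, and f(X) = X + Σ_{i≥1} a_i X^{i+b} ∈ F_p[[X]]. Define Δ_1 = f - X, Δ_{m+1} = Δ_m∘f - Δ_m, and write Δ_m = Σ_{n≥1} A_{n,m} X^{bm+n}. Then the first b+1 coefficients satisfy the matrix recurrence: A_{j,m+1} = Σ_{k=1}^{j} a_{j-k+1}(bm+k) A_{k,m} for 1 ≤ j ≤ b, and A_{b+1,m+1} = (a₁²·C(bm+1,2) + a_{b+1}(bm+1))A_{1,m} + Σ_{k=2}^{b+1} a_{b+2-k}(bm+k) A_{k,m}, with initial conditions A_{n,1} = a_n for 1 ≤ n ≤ b+1. -/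
/-- Composition `f ∘ g` of formal power series (intended for `g` with zero constant term). -/
noncomputable def PowerSeries.comp {R : Type*} [CommRing R] (f g : PowerSeries R) :
    PowerSeries R :=
  PowerSeries.mk fun n =>
    PowerSeries.coeff (R := R) n (Polynomial.eval₂ (PowerSeries.C (R := R)) g (PowerSeries.trunc (n + 1) f))

/-!
Write `f = X + g` with `X ^ (b + 1) ∣ g`. For `D` divisible by `X ^ (c + 1)`, the `N`-th coefficient
of `D ∘ f - D` is `∑ₙ dₙ (coeff_N (X + g)ⁿ - [N = n])`. Since `(X + g)ⁿ = Xⁿ (1 + u)ⁿ` with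
`X ^ b ∣ u`, modulo `X ^ (n + 3b)` only `1 + n u + C(n,2) u²` matters, so for `N ≤ c + 2b + 1`
the difference consists of the linear terms `n dₙ g_{N-n+1}` plus one quadratic term, at
`n = c + 1`, `N = c + 2b + 1`. With `c = bm` this shows `X ^ (bm + 1) ∣ Δ_m` by induction and then
reads off the recurrence.
-/

open PowerSeries Finset

theorem exists_one_add_pow_eq {R : Type*} [CommSemiring R] (u : R) (n : ℕ) :
    ∃ r, (1 + u) ^ n = 1 + n * u + n.choose 2 * u ^ 2 + u ^ 3 * r := by
  induction n with
  | zero => exact ⟨0, by simp⟩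
  | succ n ih =>
    obtain ⟨r, hr⟩ := ih
    refine ⟨n.choose 2 + r * (1 + u), ?_⟩
    rw [pow_succ, hr, Nat.choose_succ_succ', Nat.choose_one_right]
    push_cast
    ring

theorem coeff_X_add_pow {R : Type*} [CommRing R] {b : ℕ} (hb : 1 ≤ b) {g : R⟦X⟧}
    (hg : X ^ (b + 1) ∣ g) (n : ℕ) {M : ℕ} (hM : M ≤ 2 * b) :
    coeff (n + M) ((X + g) ^ n) = (if M = 0 then 1 else 0) + n * coeff (M + 1) g
      + if M = 2 * b then n.choose 2 * coeff (b + 1) g ^ 2 else 0 := by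
  obtain ⟨h, rfl⟩ := hg
  obtain ⟨r, hr⟩ := exists_one_add_pow_eq (X ^ b * h) n
  have hX : X + X ^ (b + 1) * h = X * (1 + X ^ b * h) := by ring
  have hsq : (X ^ b * h) ^ 2 = X ^ (2 * b) * h ^ 2 := by ring
  have hcube : (X ^ b * h) ^ 3 * r = X ^ (3 * b) * (h ^ 3 * r) := by ring
  rw [hX, mul_pow, add_comm n M, coeff_X_pow_mul, hr, hsq, hcube]
  simp only [map_add, coeff_one, ← map_natCast (C (R := R)), coeff_C_mul, coeff_X_pow_mul']
  rw [if_neg (by omega : ¬3 * b ≤ M), add_zero, if_pos le_rfl, Nat.sub_self,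
    Nat.add_sub_add_right, if_congr Nat.add_le_add_iff_right rfl rfl]
  by_cases hM2 : M = 2 * b
  · subst hM2
    simp [coeff_zero_eq_constantCoeff]
  · rw [if_neg hM2, if_neg (by omega : ¬2 * b ≤ M), mul_zero]

theorem PowerSeries.coeff_comp {R : Type*} [CommRing R] (F G : R⟦X⟧) (N : ℕ) :
    coeff N (F.comp G) = ∑ n ∈ range (N + 1), coeff n F * coeff N (G ^ n) := by
  rw [PowerSeries.comp, coeff_mk,
    Polynomial.eval₂_eq_sum_range' C (natDegree_trunc_lt F N) G, map_sum]
  refine sum_congr rfl fun n hn => ?_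
  rw [coeff_trunc, if_pos (mem_range.1 hn), coeff_C_mul]

theorem Finset.sum_range_eq_sum_Icc_add_of_eq_zero {M : Type*} [AddCommMonoid M] {f : ℕ → M} {c : ℕ}
    (hf : ∀ n ≤ c, f n = 0) (i : ℕ) :
    ∑ n ∈ range (c + i + 1), f n = ∑ k ∈ Icc 1 i, f (c + k) := by
  calc ∑ n ∈ range (c + i + 1), f n = ∑ n ∈ Icc (c + 1) (c + i), f n := by
        refine (sum_subset (fun n hn => ?_) fun n _ hn => hf n ?_).symm <;>
          simp only [mem_range, mem_Icc] at * <;> omega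
    _ = ∑ k ∈ Icc 1 i, f (c + k) := by rw [← map_add_left_Icc, sum_map]; rfl

theorem coeff_comp_X_add_sub {R : Type*} [CommRing R] {b c : ℕ} (hb : 1 ≤ b) {g D : R⟦X⟧}
    (hg : X ^ (b + 1) ∣ g) (hD : X ^ (c + 1) ∣ D) {i : ℕ} (hi : i ≤ 2 * b + 1) :
    coeff (c + i) (D.comp (X + g) - D) =
      ∑ k ∈ Icc 1 i, coeff (i - k + 1) g * (c + k : ℕ) * coeff (c + k) D
        + if i = 2 * b + 1 then coeff (b + 1) g ^ 2 * ((c + 1).choose 2 : ℕ) * coeff (c + 1) D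
          else 0 := by
  have hD0 : ∀ n ≤ c, coeff n D = 0 := fun n hn => X_pow_dvd_iff.1 hD n (by omega)
  -- only the exponents `n = c + k` with `k ≥ 1` survive, and for them `coeff_X_add_pow` applies
  have hterm : ∀ k ∈ Icc 1 i, coeff (c + k) D * coeff (c + i) ((X + g) ^ (c + k)) =
      (if i = k then coeff (c + i) D else 0) + coeff (i - k + 1) g * (c + k : ℕ) * coeff (c + k) D
        + if 1 = k then (if i = 2 * b + 1 then
          coeff (b + 1) g ^ 2 * ((c + 1).choose 2 : ℕ) * coeff (c + 1) D else 0) else 0 := by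
    intro k hk
    rw [mem_Icc] at hk
    rw [show c + i = c + k + (i - k) by omega, coeff_X_add_pow hb hg _ (by omega)]
    split_ifs <;> first
      | omega
      | (subst_vars; simp only [Nat.sub_self, add_zero, Nat.add_sub_cancel]; ring)
  rw [map_sub, coeff_comp,
    sum_range_eq_sum_Icc_add_of_eq_zero (fun n hn => by rw [hD0 n hn, zero_mul]),
    sum_congr rfl hterm, sum_add_distrib, sum_add_distrib, sum_ite_eq, sum_ite_eq]
  rcases Nat.eq_zero_or_pos i with rfl | hi0
  · simp [hD0]
  · rw [if_pos (mem_Icc.2 ⟨hi0, le_rfl⟩), if_pos (mem_Icc.2 ⟨le_rfl, hi0⟩)]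
    abel

theorem X_pow_dvd_comp_X_add_sub {R : Type*} [CommRing R] {b c : ℕ} (hb : 1 ≤ b) {g D : R⟦X⟧}
    (hg : X ^ (b + 1) ∣ g) (hD : X ^ (c + 1) ∣ D) : X ^ (c + b + 1) ∣ D.comp (X + g) - D := by
  refine X_pow_dvd_iff.2 fun N hN => ?_
  by_cases hNc : N ≤ c
  · rw [map_sub, coeff_comp, X_pow_dvd_iff.1 hD N (by omega), sub_zero]
    exact sum_eq_zero fun n hn => by
      rw [X_pow_dvd_iff.1 hD n (by simp only [mem_range] at hn; omega), zero_mul]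
  · obtain ⟨i, rfl⟩ : ∃ i, N = c + i := ⟨N - c, by omega⟩
    rw [coeff_comp_X_add_sub hb hg hD (by omega), if_neg (by omega), add_zero]
    exact sum_eq_zero fun k hk => by
      rw [X_pow_dvd_iff.1 hg _ (by simp only [mem_Icc] at hk; omega), zero_mul, zero_mul]

theorem coeff_add_add_comp_X_add_sub {R : Type*} [CommRing R] {b c : ℕ} (hb : 1 ≤ b)
    {g D : R⟦X⟧} (hg : X ^ (b + 1) ∣ g) (hD : X ^ (c + 1) ∣ D) {j : ℕ} (hj : j ≤ b + 1) :
    coeff (c + b + j) (D.comp (X + g) - D) =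
      ∑ k ∈ Icc 1 j, coeff (j - k + 1 + b) g * (c + k : ℕ) * coeff (c + k) D
        + if j = b + 1 then coeff (b + 1) g ^ 2 * ((c + 1).choose 2 : ℕ) * coeff (c + 1) D
          else 0 := by
  have hvanish : ∀ k ∈ Icc 1 (b + j), k ∉ Icc 1 j →
      coeff (b + j - k + 1) g * (c + k : ℕ) * coeff (c + k) D = 0 := fun k hk hk' => by
    rw [X_pow_dvd_iff.1 hg _ (by simp only [mem_Icc] at hk hk'; omega), zero_mul, zero_mul]
  rw [add_assoc, coeff_comp_X_add_sub hb hg hD (by omega),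
    ← sum_subset (Icc_subset_Icc_right (by omega)) hvanish]
  congr 1
  · exact sum_congr rfl fun k hk => by
      rw [show b + j - k + 1 = j - k + 1 + b by simp only [mem_Icc] at hk; omega]
  · exact if_congr (by omega) rfl rfl

theorem X_pow_dvd_sub_X {R : Type*} [CommRing R] {b : ℕ} {f : R⟦X⟧} (hf0 : coeff 0 f = 0)
    (hf1 : coeff 1 f = 1) (hfb : ∀ i, 2 ≤ i → i ≤ b → coeff i f = 0) : X ^ (b + 1) ∣ f - X := by
  refine X_pow_dvd_iff.2 fun j hj => ?_
  rw [map_sub, coeff_X]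
  rcases j with _ | _ | j
  · rw [hf0, if_neg zero_ne_one, sub_zero]
  · rw [hf1, if_pos rfl, sub_self]
  · rw [hfb (j + 2) (by omega) (by omega), if_neg (by omega), sub_zero]

theorem stmt18_general {p : ℕ} (b : ℕ) (hb : 1 ≤ b)
    (f : PowerSeries (ZMod p))
    (hf0 : PowerSeries.coeff (R := ZMod p) 0 f = 0)
    (hf1 : PowerSeries.coeff (R := ZMod p) 1 f = 1)
    (hfb : ∀ i, 2 ≤ i → i ≤ b → PowerSeries.coeff (R := ZMod p) i f = 0)
    (a : ℕ → ZMod p) (ha : ∀ i, a i = PowerSeries.coeff (R := ZMod p) (i + b) f)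
    (Δ : ℕ → PowerSeries (ZMod p))
    (hΔ1 : Δ 1 = f - PowerSeries.X)
    (hΔs : ∀ m ≥ 1, Δ (m + 1) = PowerSeries.comp (Δ m) f - Δ m)
    (A : ℕ → ℕ → ZMod p)
    (hA : ∀ n m, A n m = PowerSeries.coeff (R := ZMod p) (b * m + n) (Δ m)) :
    (∀ n, 1 ≤ n → n ≤ b + 1 → A n 1 = a n) ∧
    (∀ m ≥ 1, ∀ j, 1 ≤ j → j ≤ b →
      A j (m + 1) = ∑ k ∈ Finset.Icc 1 j,
        a (j - k + 1) * ((b * m + k : ℕ) : ZMod p) * A k m) ∧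
    (∀ m ≥ 1,
      A (b + 1) (m + 1)
        = ((a 1) ^ 2 * (((b * m + 1).choose 2 : ℕ) : ZMod p)
            + a (b + 1) * ((b * m + 1 : ℕ) : ZMod p)) * A 1 m
          + ∑ k ∈ Finset.Icc 2 (b + 1),
              a (b + 2 - k) * ((b * m + k : ℕ) : ZMod p) * A k m) := by
  set g := f - X with hg_def
  have hfg : f = X + g := by rw [hg_def]; ring
  have hg : X ^ (b + 1) ∣ g := X_pow_dvd_sub_X hf0 hf1 hfb
  have hga : ∀ i, 1 ≤ i → coeff (i + b) g = a i := fun i hi => by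
    rw [ha, hg_def, map_sub, coeff_X, if_neg (by omega), sub_zero]
  have hval : ∀ m ≥ 1, X ^ (b * m + 1) ∣ Δ m := by
    intro m hm
    induction m, hm using Nat.le_induction with
    | base => rwa [hΔ1, mul_one]
    | succ m hm ih =>
      rw [hΔs m hm, hfg, mul_add_one]
      exact X_pow_dvd_comp_X_add_sub hb hg ih
  have hstep : ∀ m ≥ 1, ∀ j ≤ b + 1, A j (m + 1) =
      ∑ k ∈ Icc 1 j, a (j - k + 1) * ((b * m + k : ℕ) : ZMod p) * A k m
        + if j = b + 1 then a 1 ^ 2 * (((b * m + 1).choose 2 : ℕ) : ZMod p) * A 1 m else 0 := by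
    intro m hm j hj
    rw [hA, hΔs m hm, hfg, mul_add_one, coeff_add_add_comp_X_add_sub hb hg (hval m hm) hj,
      ← hga 1 le_rfl, add_comm 1 b]
    simp only [hA, hga _ (Nat.le_add_left 1 _)]
  refine ⟨fun n hn _ => ?_, fun m hm j _ hjb => ?_, fun m hm => ?_⟩
  · rw [hA, hΔ1, mul_one, add_comm, hga n hn]
  · rw [hstep m hm j (by omega), if_neg (by omega), add_zero]
  · rw [hstep m hm (b + 1) le_rfl, if_pos rfl, ← insert_Icc_add_one_left_eq_Icc (by omega),
      sum_insert (by simp), Nat.add_sub_cancel, one_add_one_eq_two]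
    rw [sum_congr rfl fun k hk => by
      rw [show b + 1 - k + 1 = b + 2 - k by simp only [mem_Icc] at hk; omega]]
    ring

/-- generalized matrix recurrence for the first `b+1` nontrivial coefficients
`A_{n,m} = coeff_{bm+n}(Δ_m)` of the iterated differences of
`f(X) = X + ∑_{i≥1} a_i X^{i+b}`. -/
theorem stmt18 {p : ℕ} (hp : p.Prime) (hodd : p ≠ 2) (b : ℕ) (hb : 1 ≤ b)
    (f : PowerSeries (ZMod p))
    (hf0 : PowerSeries.coeff (R := ZMod p) 0 f = 0)
    (hf1 : PowerSeries.coeff (R := ZMod p) 1 f = 1)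
    (hfb : ∀ i, 2 ≤ i → i ≤ b → PowerSeries.coeff (R := ZMod p) i f = 0)
    (a : ℕ → ZMod p) (ha : ∀ i, a i = PowerSeries.coeff (R := ZMod p) (i + b) f)
    (Δ : ℕ → PowerSeries (ZMod p))
    (hΔ1 : Δ 1 = f - PowerSeries.X)
    (hΔs : ∀ m ≥ 1, Δ (m + 1) = PowerSeries.comp (Δ m) f - Δ m)
    (A : ℕ → ℕ → ZMod p)
    (hA : ∀ n m, A n m = PowerSeries.coeff (R := ZMod p) (b * m + n) (Δ m)) :
    (∀ n, 1 ≤ n → n ≤ b + 1 → A n 1 = a n) ∧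
    (∀ m ≥ 1, ∀ j, 1 ≤ j → j ≤ b →
      A j (m + 1) = ∑ k ∈ Finset.Icc 1 j,
        a (j - k + 1) * ((b * m + k : ℕ) : ZMod p) * A k m) ∧
    (∀ m ≥ 1,
      A (b + 1) (m + 1)
        = ((a 1) ^ 2 * (((b * m + 1).choose 2 : ℕ) : ZMod p)
            + a (b + 1) * ((b * m + 1 : ℕ) : ZMod p)) * A 1 m
          + ∑ k ∈ Finset.Icc 2 (b + 1),
              a (b + 2 - k) * ((b * m + k : ℕ) : ZMod p) * A k m) :=
  stmt18_general b hb f hf0 hf1 hfb a ha Δ hΔ1 hΔs A hA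
end
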